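/- arXiv:2309.08729 — 3 statements merged into one kernel-verified Lean document; each statement's English description precedes it below -/
import Mathlib

section
/- Landau's theorem: Let A : [1,∞) → ℝ be locally integrable and suppose that A is eventually of one sign (there exists X ≥ 1 such that A(x) ≥ 0 for all x ≥ X, or A(x) ≤ 0 for all x ≥ X). Let σ₀ be a real number such that the integral g(s) = ∫₁^∞ A(x) x^{-s} dx converges for every real s = σ > σ₀ and diverges for every real s = σ < σ₀. Then the holomorphic function g on the half-plane {s ∈ ℂ : Re s > σ₀} has a singularity at s = σ₀: there is no open disc centered at σ₀ and holomorphic function on it agreeing with g on the intersection of the disc with the half-plane {Re s > σ₀}. -/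
/-!
Replacing `A` by `-A` we may assume `A ≥ 0` on `[X, ∞)`. The part of `g` coming from `(1, X]` is
entire, so subtracting it we may also assume `A ≥ 0` everywhere. Differentiating under the
integral sign, the Taylor coefficients of `g` at a real point `a > σ₀` are
`(-1)^n / n! ∫ A(x) (log x)^n x^{-a} dx`. If `g` extended holomorphically to a disc around `σ₀`,
its Taylor series at `a` would converge at some real `σ₁ < σ₀`. All its terms are nonnegative,
so by Tonelli the series may be summed under the integral sign, where
`∑ (a - σ₁)^n (log x)^n / n! · x^{-a} = x^{-σ₁}`: hence `A(x) x^{-σ₁}` is integrable,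
contradicting divergence at `σ₁`.
-/

open MeasureTheory Filter Set Real Metric Topology
open scoped Nat

namespace Landau

variable {S : Set ℝ} {A : ℝ → ℝ} {σ₀ : ℝ}

/-- The `n`-th derivative of `s ↦ ∫_S A(x) x^{-s} dx` (`iteratedDeriv_landauIntegral`). -/
noncomputable def landauIntegral (S : Set ℝ) (A : ℝ → ℝ) (n : ℕ) (s : ℂ) : ℂ :=
  ∫ x in S, (A x : ℂ) * (-(log x : ℂ)) ^ n * (x : ℂ) ^ (-s)

lemma landauIntegral_neg (S : Set ℝ) (A : ℝ → ℝ) (n : ℕ) (s : ℂ) :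
    landauIntegral S (-A) n s = -landauIntegral S A n s := by
  simp only [landauIntegral, Pi.neg_apply, Complex.ofReal_neg, neg_mul, integral_neg]

lemma landauIntegral_ofReal (hS : MeasurableSet S) (hS0 : S ⊆ Ioi 0) (n : ℕ) (a : ℝ) :
    landauIntegral S A n a = (((-1) ^ n * ∫ x in S, A x * log x ^ n * x ^ (-a) : ℝ) : ℂ) := by
  rw [landauIntegral, ← integral_const_mul, ← integral_complex_ofReal]
  refine setIntegral_congr_fun hS fun x hx => ?_
  rw [← Complex.ofReal_neg a, ← Complex.ofReal_cpow (le_of_lt (hS0 hx))]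
  push_cast
  ring

lemma log_pow_mul_rpow_le {x : ℝ} (hx : 1 ≤ x) (n : ℕ) {δ : ℝ} (hδ : 0 < δ) (σ : ℝ) :
    log x ^ n * x ^ (-σ) ≤ δ⁻¹ ^ n * x ^ (-(σ - n * δ)) := by
  have hx0 : 0 < x := one_pos.trans_le hx
  calc log x ^ n * x ^ (-σ) ≤ (x ^ δ / δ) ^ n * x ^ (-σ) := by
        gcongr
        · exact log_nonneg hx
        · exact log_le_rpow_div hx0.le hδ
    _ = δ⁻¹ ^ n * x ^ (-(σ - n * δ)) := by
        rw [show -(σ - n * δ) = δ * n + -σ by ring, rpow_add hx0, rpow_mul hx0.le, rpow_natCast,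
          div_pow, inv_pow]
        ring

lemma aestronglyMeasurable_of_integrableOn_mul_rpow (hS : MeasurableSet S) (hS0 : S ⊆ Ioi 0)
    {σ : ℝ} (h : IntegrableOn (fun x => A x * x ^ (-σ)) S) :
    AEStronglyMeasurable A (volume.restrict S) := by
  have hpow : ContinuousOn (fun x : ℝ => x ^ σ) S :=
    continuousOn_id.rpow_const fun x hx => Or.inl (ne_of_gt (hS0 hx))
  refine (h.aestronglyMeasurable.mul (hpow.aestronglyMeasurable hS)).congr ?_
  filter_upwards [ae_restrict_mem hS] with x hx
  rw [Pi.mul_apply, mul_assoc, ← rpow_add (hS0 hx), neg_add_cancel, rpow_zero, mul_one]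

lemma integrableOn_mul_log_pow_mul_rpow (hS : MeasurableSet S) (hS1 : S ⊆ Ici 1)
    (hconv : ∀ σ, σ₀ < σ → IntegrableOn (fun x => A x * x ^ (-σ)) S) (n : ℕ) {σ : ℝ}
    (hσ : σ₀ < σ) : IntegrableOn (fun x => A x * log x ^ n * x ^ (-σ)) S := by
  set δ := (σ - σ₀) / (n + 1)
  have hδ : 0 < δ := div_pos (sub_pos.2 hσ) (by positivity)
  have hσ' : σ₀ < σ - n * δ := by
    have : σ - n * δ - σ₀ = δ := by simp only [δ]; field_simp; ring
    linarith
  have hS0 : S ⊆ Ioi 0 := hS1.trans (Ici_subset_Ioi.2 one_pos)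
  have hcont : ContinuousOn (fun x => log x ^ n * x ^ (-σ)) S :=
    ((continuousOn_log.mono fun x hx => (hS0 hx).ne').pow n).mul
      (continuousOn_id.rpow_const fun x hx => Or.inl (hS0 hx).ne')
  refine ((hconv _ hσ').norm.const_mul (δ⁻¹ ^ n)).mono' ?_ ?_
  · exact ((aestronglyMeasurable_of_integrableOn_mul_rpow hS hS0 (hconv _ hσ')).mul
      (hcont.aestronglyMeasurable hS)).congr (Eventually.of_forall fun x => (mul_assoc _ _ _).symm)
  · filter_upwards [ae_restrict_mem hS] with x hx
    have hx1 : 1 ≤ x := hS1 hx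
    simp only [norm_mul, norm_pow, norm_of_nonneg (log_nonneg hx1),
      norm_of_nonneg (rpow_nonneg (zero_le_one.trans hx1) _)]
    linarith [mul_le_mul_of_nonneg_left (log_pow_mul_rpow_le hx1 n hδ σ) (norm_nonneg (A x))]

lemma norm_landauIntegrand {x : ℝ} (hx : 0 < x) (n : ℕ) (s : ℂ) :
    ‖(A x : ℂ) * (-(log x : ℂ)) ^ n * (x : ℂ) ^ (-s)‖ = ‖A x * log x ^ n * x ^ (-s.re)‖ := by
  simp only [norm_mul, norm_pow, norm_neg, Complex.norm_real,
    Complex.norm_cpow_eq_rpow_re_of_pos hx, Complex.neg_re, norm_of_nonneg (rpow_nonneg hx.le _)]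

lemma aestronglyMeasurable_landauIntegrand (hS : MeasurableSet S) (hS0 : S ⊆ Ioi 0) {σ : ℝ}
    (h : IntegrableOn (fun x => A x * x ^ (-σ)) S) (n : ℕ) (s : ℂ) :
    AEStronglyMeasurable (fun x : ℝ => (A x : ℂ) * (-(log x : ℂ)) ^ n * (x : ℂ) ^ (-s))
      (volume.restrict S) := by
  have hlog : ContinuousOn (fun x : ℝ => (-(log x : ℂ)) ^ n) S :=
    ((Complex.continuous_ofReal.comp_continuousOn
      (continuousOn_log.mono fun x hx => (hS0 hx).ne')).neg).pow n
  have hpow : ContinuousOn (fun x : ℝ => (x : ℂ) ^ (-s)) S := fun x hx =>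
    (Complex.continuousAt_ofReal_cpow_const x _ (Or.inr (hS0 hx).ne')).continuousWithinAt
  exact ((Complex.continuous_ofReal.comp_aestronglyMeasurable
    (aestronglyMeasurable_of_integrableOn_mul_rpow hS hS0 h)).mul
    (hlog.aestronglyMeasurable hS)).mul (hpow.aestronglyMeasurable hS)

lemma integrableOn_landauIntegrand (hS : MeasurableSet S) (hS1 : S ⊆ Ici 1)
    (hconv : ∀ σ, σ₀ < σ → IntegrableOn (fun x => A x * x ^ (-σ)) S) (n : ℕ) {s : ℂ}
    (hs : σ₀ < s.re) :
    IntegrableOn (fun x : ℝ => (A x : ℂ) * (-(log x : ℂ)) ^ n * (x : ℂ) ^ (-s)) S := by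
  have hS0 : S ⊆ Ioi 0 := hS1.trans (Ici_subset_Ioi.2 one_pos)
  refine (integrableOn_mul_log_pow_mul_rpow hS hS1 hconv n hs).congr'
    (aestronglyMeasurable_landauIntegrand hS hS0 (hconv _ hs) n s) ?_
  filter_upwards [ae_restrict_mem hS] with x hx
  exact (norm_landauIntegrand (hS0 hx) n s).symm

lemma hasDerivAt_landauIntegral (hS : MeasurableSet S) (hS1 : S ⊆ Ici 1)
    (hconv : ∀ σ, σ₀ < σ → IntegrableOn (fun x => A x * x ^ (-σ)) S) (n : ℕ) {s : ℂ}
    (hs : σ₀ < s.re) : HasDerivAt (landauIntegral S A n) (landauIntegral S A (n + 1) s) s := by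
  have hS0 : S ⊆ Ioi 0 := hS1.trans (Ici_subset_Ioi.2 one_pos)
  obtain ⟨σ, hσ, hσs⟩ := exists_between hs
  have hball : ∀ t ∈ ball s (s.re - σ), σ ≤ t.re := fun t ht => by
    have := (abs_le.1 ((Complex.abs_re_le_norm (t - s)).trans (mem_ball_iff_norm.1 ht).le)).1
    rw [Complex.sub_re] at this
    linarith
  refine (hasDerivAt_integral_of_dominated_loc_of_deriv_le
    (F' := fun t x => (A x : ℂ) * (-(log x : ℂ)) ^ (n + 1) * (x : ℂ) ^ (-t))
    (bound := fun x => ‖A x * log x ^ (n + 1) * x ^ (-σ)‖) (ball_mem_nhds s (sub_pos.2 hσs))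
    (Eventually.of_forall (aestronglyMeasurable_landauIntegrand hS hS0 (hconv _ hσ) n))
    (integrableOn_landauIntegrand hS hS1 hconv n hs)
    (aestronglyMeasurable_landauIntegrand hS hS0 (hconv _ hσ) (n + 1) s) ?_
    (integrableOn_mul_log_pow_mul_rpow hS hS1 hconv (n + 1) hσ).norm ?_).2
  · filter_upwards [ae_restrict_mem hS] with x hx t ht
    have hx1 : 1 ≤ x := hS1 hx
    rw [norm_landauIntegrand (one_pos.trans_le hx1)]
    simp only [norm_mul, norm_of_nonneg (rpow_nonneg (zero_le_one.trans hx1) _)]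
    gcongr
    exact hball t ht
  · filter_upwards [ae_restrict_mem hS] with x hx t _
    have hx0 : 0 < x := hS0 hx
    have hcpow := ((hasDerivAt_neg t).const_cpow (c := (x : ℂ))
      (Or.inl (Complex.ofReal_ne_zero.2 hx0.ne'))).const_mul ((A x : ℂ) * (-(log x : ℂ)) ^ n)
    refine hcpow.congr_deriv ?_
    rw [← Complex.ofReal_log hx0.le]
    ring

lemma iteratedDeriv_landauIntegral (hS : MeasurableSet S) (hS1 : S ⊆ Ici 1)
    (hconv : ∀ σ, σ₀ < σ → IntegrableOn (fun x => A x * x ^ (-σ)) S) (n : ℕ) {s : ℂ}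
    (hs : σ₀ < s.re) : iteratedDeriv n (landauIntegral S A 0) s = landauIntegral S A n s := by
  induction n generalizing s with
  | zero => rfl
  | succ n ih =>
    have hev : iteratedDeriv n (landauIntegral S A 0) =ᶠ[𝓝 s] landauIntegral S A n :=
      eventually_of_mem ((isOpen_lt continuous_const Complex.continuous_re).mem_nhds hs)
        fun t ht => ih ht
    rw [iteratedDeriv_succ, hev.deriv_eq, (hasDerivAt_landauIntegral hS hS1 hconv n hs).deriv]

lemma differentiable_landauIntegral (hS : MeasurableSet S) (hS1 : S ⊆ Ici 1)
    (hconv : ∀ σ : ℝ, IntegrableOn (fun x => A x * x ^ (-σ)) S) :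
    Differentiable ℂ (landauIntegral S A 0) := fun s =>
  (hasDerivAt_landauIntegral hS hS1 (σ₀ := s.re - 1) (fun σ _ => hconv σ) 0
    (by linarith)).differentiableAt

lemma integrableOn_mul_rpow_of_subset_Icc {a b : ℝ} (ha : 0 < a) (hS : MeasurableSet S)
    (hSab : S ⊆ Icc a b) {σ : ℝ} (h : IntegrableOn (fun x => A x * x ^ (-σ)) S) (τ : ℝ) :
    IntegrableOn (fun x => A x * x ^ (-τ)) S := by
  have hpow : ContinuousOn (fun x : ℝ => x ^ (σ - τ)) (Icc a b) :=
    continuousOn_id.rpow_const fun x hx => Or.inl (ha.trans_le hx.1).ne'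
  refine (h.mul_continuousOn_of_subset hpow hS isCompact_Icc hSab).congr_fun (fun x hx => ?_) hS
  dsimp only
  rw [mul_assoc, ← rpow_add (ha.trans_le (hSab hx).1)]
  ring_nf

lemma hasSum_mul_log_pow_mul_rpow {x : ℝ} (hx : 0 < x) (c a w : ℝ) :
    HasSum (fun n : ℕ => w ^ n / n ! * (c * log x ^ n * x ^ (-a))) (c * x ^ (-(a - w))) := by
  have hexp : HasSum (fun n : ℕ => (w * log x) ^ n / n !) (x ^ w) := by
    rw [rpow_def_of_pos hx, mul_comm (log x), exp_eq_exp_ℝ]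
    exact NormedSpace.expSeries_div_hasSum_exp _
  have hterm : (fun n : ℕ => w ^ n / n ! * (c * log x ^ n * x ^ (-a)))
      = fun n => c * x ^ (-a) * ((w * log x) ^ n / n !) := funext fun n => by ring
  rw [hterm, show -(a - w) = -a + w by ring, rpow_add hx, ← mul_assoc]
  exact hexp.mul_left _

/-- Tonelli's theorem for the expansion `x^{w-a} = ∑ (w log x)^n / n! x^{-a}`. -/
lemma integrableOn_mul_rpow_of_summable (hS : MeasurableSet S) (hS1 : S ⊆ Ici 1)
    (hA0 : ∀ x ∈ S, 0 ≤ A x) {a w : ℝ} (hw : 0 ≤ w)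
    (hint : ∀ n : ℕ, IntegrableOn (fun x => A x * log x ^ n * x ^ (-a)) S)
    (hsum : Summable fun n : ℕ => w ^ n / n ! * ∫ x in S, A x * log x ^ n * x ^ (-a)) :
    IntegrableOn (fun x => A x * x ^ (-(a - w))) S := by
  set f : ℕ → ℝ → ℝ := fun n x => w ^ n / n ! * (A x * log x ^ n * x ^ (-a))
  have hS0 : S ⊆ Ioi 0 := hS1.trans (Ici_subset_Ioi.2 one_pos)
  have hf0 : ∀ n, ∀ x ∈ S, 0 ≤ f n x := fun n x hx =>
    mul_nonneg (by positivity) (mul_nonneg (mul_nonneg (hA0 x hx)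
      (pow_nonneg (log_nonneg (hS1 hx)) n)) (rpow_nonneg (hS0 hx).le _))
  have hfint : ∀ n, IntegrableOn (f n) S := fun n => (hint n).const_mul _
  have hf : ∀ x ∈ S, HasSum (fun n => f n x) (A x * x ^ (-(a - w))) := fun x hx =>
    hasSum_mul_log_pow_mul_rpow (hS0 hx) (A x) a w
  have hlint : ∫⁻ x in S, ENNReal.ofReal (A x * x ^ (-(a - w)))
      = ∑' n, ENNReal.ofReal (∫ x in S, f n x) := calc
    _ = ∫⁻ x in S, ∑' n, ENNReal.ofReal (f n x) := setLIntegral_congr_fun hS fun x hx => by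
        rw [← (hf x hx).tsum_eq,
          ENNReal.ofReal_tsum_of_nonneg (fun n => hf0 n x hx) (hf x hx).summable]
    _ = ∑' n, ∫⁻ x in S, ENNReal.ofReal (f n x) :=
        lintegral_tsum fun n => (hfint n).aemeasurable.ennreal_ofReal
    _ = _ := tsum_congr fun n => (ofReal_integral_eq_lintegral_ofReal (hfint n)
        (ae_restrict_of_forall_mem hS (hf0 n))).symm
  have hsum_integral : Summable fun n => ∫ x in S, f n x := by
    simpa only [f, integral_const_mul] using hsum
  have hAmeas :=
    aestronglyMeasurable_of_integrableOn_mul_rpow hS hS0 (σ := a) (by simpa using hint 0)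
  have hpow : ContinuousOn (fun x : ℝ => x ^ (-(a - w))) S :=
    continuousOn_id.rpow_const fun x hx => Or.inl (hS0 hx).ne'
  refine ⟨hAmeas.mul (hpow.aestronglyMeasurable hS), ?_⟩
  rw [hasFiniteIntegral_iff_ofReal (ae_restrict_of_forall_mem hS fun x hx =>
      (hf x hx).nonneg fun n => hf0 n x hx), hlint,
    ← ENNReal.ofReal_tsum_of_nonneg (fun n => setIntegral_nonneg hS (hf0 n)) hsum_integral]
  exact ENNReal.ofReal_lt_top

lemma exists_integrableOn_of_nonneg_of_differentiableOn (hS : MeasurableSet S)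
    (hS1 : S ⊆ Ici 1) (hA0 : ∀ x ∈ S, 0 ≤ A x)
    (hconv : ∀ σ, σ₀ < σ → IntegrableOn (fun x => A x * x ^ (-σ)) S) {r : ℝ} (hr : 0 < r)
    {G : ℂ → ℂ} (hG : DifferentiableOn ℂ G (ball (σ₀ : ℂ) r))
    (hGA : ∀ s ∈ ball (σ₀ : ℂ) r, σ₀ < s.re → G s = landauIntegral S A 0 s) :
    ∃ σ < σ₀, IntegrableOn (fun x => A x * x ^ (-σ)) S := by
  set a := σ₀ + r / 4
  set w := r / 2
  have ha : σ₀ < a := by simp only [a]; linarith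
  refine ⟨a - w, by simp only [a, w]; linarith, integrableOn_mul_rpow_of_summable hS hS1 hA0
    (by positivity) (fun n => integrableOn_mul_log_pow_mul_rpow hS hS1 hconv n ha) ?_⟩
  have haσ₀ : dist (a : ℂ) σ₀ = r / 4 := by
    rw [Complex.isometry_ofReal.dist_eq, Real.dist_eq, abs_of_pos (by simp only [a]; linarith)]
    ring
  have hsub : ball (a : ℂ) (3 * r / 4) ⊆ ball (σ₀ : ℂ) r :=
    ball_subset_ball' (by rw [haσ₀]; linarith)
  have hmem : ((a - w : ℝ) : ℂ) ∈ ball (a : ℂ) (3 * r / 4) := by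
    rw [mem_ball, Complex.isometry_ofReal.dist_eq, Real.dist_eq,
      abs_of_neg (by simp only [w]; linarith)]
    simp only [w]
    linarith
  have hopen : IsOpen (ball (σ₀ : ℂ) r ∩ {s | σ₀ < s.re}) :=
    isOpen_ball.inter (isOpen_lt continuous_const Complex.continuous_re)
  have hGa : G =ᶠ[𝓝 (a : ℂ)] landauIntegral S A 0 :=
    eventually_of_mem (hopen.mem_nhds ⟨hsub (mem_ball_self (by positivity)), by simpa using ha⟩)
      fun s hs => hGA s hs.1 hs.2
  have hterm : ∀ n : ℕ, (n ! : ℂ)⁻¹ • (((a - w : ℝ) : ℂ) - a) ^ n • iteratedDeriv n G a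
      = ((w ^ n / n ! * ∫ x in S, A x * log x ^ n * x ^ (-a) : ℝ) : ℂ) := fun n => by
    rw [hGa.iteratedDeriv_eq, iteratedDeriv_landauIntegral hS hS1 hconv n (by simpa using ha),
      landauIntegral_ofReal hS (hS1.trans (Ici_subset_Ioi.2 one_pos)), smul_eq_mul, smul_eq_mul,
      ← Complex.ofReal_sub, show a - w - a = -w by ring]
    have hsign : (-(w : ℂ)) ^ n * (-1) ^ n = (w : ℂ) ^ n := by
      rw [← mul_pow, neg_mul_neg, mul_one]
    push_cast
    rw [← hsign]
    ring
  exact Complex.summable_ofReal.1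
    ((Complex.hasSum_taylorSeries_on_ball (hG.mono hsub) hmem).summable.congr hterm)

lemma exists_integrableOn_of_eventually_nonneg {X : ℝ} (hX1 : 1 ≤ X)
    (hA0 : ∀ x, X ≤ x → 0 ≤ A x)
    (hconv : ∀ σ, σ₀ < σ → IntegrableOn (fun x => A x * x ^ (-σ)) (Ioi 1)) {r : ℝ} (hr : 0 < r)
    {G : ℂ → ℂ} (hG : DifferentiableOn ℂ G (ball (σ₀ : ℂ) r))
    (hGA : ∀ s ∈ ball (σ₀ : ℂ) r, σ₀ < s.re → G s = landauIntegral (Ioi 1) A 0 s) :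
    ∃ σ < σ₀, IntegrableOn (fun x => A x * x ^ (-σ)) (Ioi 1) := by
  have hsplit : Ioc 1 X ∪ Ioi X = Ioi 1 := Ioc_union_Ioi_eq_Ioi hX1
  have hhead : ∀ σ : ℝ, IntegrableOn (fun x => A x * x ^ (-σ)) (Ioc 1 X) :=
    integrableOn_mul_rpow_of_subset_Icc one_pos measurableSet_Ioc Ioc_subset_Icc_self
      ((hconv (σ₀ + 1) (by linarith)).mono_set Ioc_subset_Ioi_self)
  have htail : ∀ σ, σ₀ < σ → IntegrableOn (fun x => A x * x ^ (-σ)) (Ioi X) := fun σ hσ =>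
    (hconv σ hσ).mono_set (Ioi_subset_Ioi hX1)
  have hIoc : Ioc 1 X ⊆ Ici 1 := Ioc_subset_Ioi_self.trans Ioi_subset_Ici_self
  have hIoi : Ioi X ⊆ Ici 1 := fun x hx => hX1.trans (le_of_lt hx)
  have hGtail : ∀ s ∈ ball (σ₀ : ℂ) r, σ₀ < s.re →
      G s - landauIntegral (Ioc 1 X) A 0 s = landauIntegral (Ioi X) A 0 s := by
    intro s hs hre
    rw [hGA s hs hre, landauIntegral, ← hsplit, setIntegral_union (Ioc_disjoint_Ioi le_rfl)
      measurableSet_Ioi (integrableOn_landauIntegrand measurableSet_Ioc hIoc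
        (fun σ _ => hhead σ) 0 (σ₀ := s.re - 1) (by linarith))
      (integrableOn_landauIntegrand measurableSet_Ioi hIoi htail 0 hre)]
    exact add_sub_cancel_left _ _
  obtain ⟨σ, hσ, hint⟩ := exists_integrableOn_of_nonneg_of_differentiableOn measurableSet_Ioi hIoi
    (fun x hx => hA0 x (le_of_lt hx)) htail hr
    (hG.sub (differentiable_landauIntegral measurableSet_Ioc hIoc hhead).differentiableOn) hGtail
  exact ⟨σ, hσ, hsplit ▸ (hhead σ).union hint⟩

end Landau

open Landau

theorem landau_theorem_general (A : ℝ → ℝ) (σ₀ : ℝ)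
    (hsign : ∃ X : ℝ, 1 ≤ X ∧ ((∀ x : ℝ, X ≤ x → 0 ≤ A x) ∨ (∀ x : ℝ, X ≤ x → A x ≤ 0)))
    (hconv : ∀ σ : ℝ, σ₀ < σ →
      IntegrableOn (fun x : ℝ => A x * x ^ (-σ)) (Set.Ioi (1 : ℝ)))
    (hdiv : ∀ σ : ℝ, σ < σ₀ →
      ¬ IntegrableOn (fun x : ℝ => A x * x ^ (-σ)) (Set.Ioi (1 : ℝ))) :
    ¬ ∃ (r : ℝ) (G : ℂ → ℂ), 0 < r ∧
        DifferentiableOn ℂ G (Metric.ball (σ₀ : ℂ) r) ∧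
        ∀ s ∈ Metric.ball (σ₀ : ℂ) r, σ₀ < s.re →
          G s = ∫ x in Set.Ioi (1 : ℝ), (A x : ℂ) * (x : ℂ) ^ (-s) := by
  rintro ⟨r, G, hr, hG, hGA⟩
  have hGA' : ∀ s ∈ ball (σ₀ : ℂ) r, σ₀ < s.re → G s = landauIntegral (Ioi 1) A 0 s := by
    simpa only [landauIntegral, pow_zero, mul_one] using hGA
  obtain ⟨X, hX1, hpos | hneg⟩ := hsign
  · obtain ⟨σ, hσ, hint⟩ := exists_integrableOn_of_eventually_nonneg hX1 hpos hconv hr hG hGA'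
    exact hdiv σ hσ hint
  · obtain ⟨σ, hσ, hint⟩ := exists_integrableOn_of_eventually_nonneg (A := -A) hX1
      (fun x hx => neg_nonneg.2 (hneg x hx))
      (fun σ hσ => by
        simpa only [Pi.neg_apply, neg_mul, integrableOn_fun_neg_iff] using hconv σ hσ)
      hr hG.neg (fun s hs hre => by rw [landauIntegral_neg, ← hGA' s hs hre]; rfl)
    exact hdiv σ hσ (by simpa only [Pi.neg_apply, neg_mul, integrableOn_fun_neg_iff] using hint)

/-- **Landau's theorem.** If `A : [1,∞) → ℝ` is locally integrable and eventually of one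
sign, and the integral `g(s) = ∫₁^∞ A(x) x^{-s} dx` converges for every real `σ > σ₀` and
diverges for every real `σ < σ₀`, then `g` has a singularity at `s = σ₀`: there is no open
disc centered at `σ₀` carrying a holomorphic function agreeing with `g` on the part of the
disc lying in the half-plane `{Re s > σ₀}`. -/
theorem landau_theorem (A : ℝ → ℝ) (σ₀ : ℝ)
    (hA : LocallyIntegrableOn A (Set.Ici (1 : ℝ)))
    (hsign : ∃ X : ℝ, 1 ≤ X ∧ ((∀ x : ℝ, X ≤ x → 0 ≤ A x) ∨ (∀ x : ℝ, X ≤ x → A x ≤ 0)))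
    (hconv : ∀ σ : ℝ, σ₀ < σ →
      IntegrableOn (fun x : ℝ => A x * x ^ (-σ)) (Set.Ioi (1 : ℝ)))
    (hdiv : ∀ σ : ℝ, σ < σ₀ →
      ¬ IntegrableOn (fun x : ℝ => A x * x ^ (-σ)) (Set.Ioi (1 : ℝ))) :
    ¬ ∃ (r : ℝ) (G : ℂ → ℂ), 0 < r ∧
        DifferentiableOn ℂ G (Metric.ball (σ₀ : ℂ) r) ∧
        ∀ s ∈ Metric.ball (σ₀ : ℂ) r, σ₀ < s.re →
          G s = ∫ x in Set.Ioi (1 : ℝ), (A x : ℂ) * (x : ℂ) ^ (-s) :=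
  landau_theorem_general A σ₀ hsign hconv hdiv
end

section
/- Dirichlet's divisor theorem: ∑_{n≤x} τ(n) = x·log x + (2γ − 1)·x + O(√x) as x → ∞, where τ(n) = #{d ∈ ℕ : d ∣ n} is the number-of-divisors function and γ is the Euler–Mascheroni constant; that is, there exist constants C > 0 and x₀ ≥ 1 such that |∑_{n≤x} τ(n) − x·log x − (2γ−1)x| ≤ C√x for all x ≥ x₀. -/
/-!
Write `∑_{n ≤ N} τ(n) = ∑_{d ≤ N} ⌊N/d⌋`, the number of lattice points under the hyperbola
`ab ≤ N`. With `K = ⌊√N⌋`, the symmetry of the hyperbola gives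
`∑_{n ≤ N} τ(n) = 2 ∑_{a ≤ K} ⌊N/a⌋ - K²`. Dropping the floors costs `O(K)`, and
`H_K = log K + γ + O(1/K)`, so `∑_{n ≤ N} τ(n) = 2N (log K + γ) - K² + O(√N)`; replacing
`N` by `x`, `log K` by `log √x` and `K²` by `x` costs another `O(√x)`.
-/

open Finset Real

namespace Nat

lemma filter_mul_le_Ioc_eq_Ioc_div {a N M : ℕ} (L : ℕ) (ha : 0 < a) (hM : N / a ≤ M) :
    {b ∈ Ioc L M | b * a ≤ N} = Ioc L (N / a) := by
  ext b
  simp only [mem_filter, mem_Ioc, ← Nat.le_div_iff_mul_le ha]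
  omega

lemma sum_Ioc_card_divisors (N : ℕ) :
    ∑ n ∈ Ioc 0 N, #n.divisors = ∑ d ∈ Ioc 0 N, N / d := by
  have hdivisors : ∀ n ∈ Ioc 0 N, n.divisors = {d ∈ Ioc 0 N | d ∣ n} := by
    intro n hn
    ext d
    simp only [mem_divisors, mem_filter, mem_Ioc] at hn ⊢
    constructor
    · rintro ⟨hd, -⟩
      exact ⟨⟨Nat.pos_of_dvd_of_pos hd hn.1, (Nat.le_of_dvd hn.1 hd).trans hn.2⟩, hd⟩
    · rintro ⟨-, hd⟩
      exact ⟨hd, hn.1.ne'⟩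
  rw [sum_congr rfl fun n hn => congrArg card (hdivisors n hn)]
  have hswap := sum_card_bipartiteAbove_eq_sum_card_bipartiteBelow (s := Ioc 0 N) (t := Ioc 0 N)
    (· ∣ ·)
  simp only [bipartiteAbove, bipartiteBelow, Ioc_filter_dvd_card_eq_div] at hswap
  exact hswap.symm

/-- Dirichlet's hyperbola method: for `a > K`, `a * b ≤ N` forces `b ≤ K`, so the terms with
`a > K` count the same lattice points as the terms `N / b - K` with `b ≤ K`. -/
lemma sum_Ioc_div_add_mul_self {N K : ℕ} (hK : K * K ≤ N) (hN : N < (K + 1) * (K + 1)) :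
    ∑ a ∈ Ioc 0 N, N / a + K * K = 2 * ∑ a ∈ Ioc 0 K, N / a := by
  have hKN : K ≤ N := (Nat.le_mul_self K).trans hK
  have htail : ∑ a ∈ Ioc K N, N / a = ∑ b ∈ Ioc 0 K, (N / b - K) := by
    calc ∑ a ∈ Ioc K N, N / a
        = ∑ a ∈ Ioc K N, #{b ∈ Ioc 0 K | a * b ≤ N} := by
          refine sum_congr rfl fun a ha => ?_
          have ha : K < a ∧ a ≤ N := mem_Ioc.1 ha
          have hdiv : N / a ≤ K :=
            Nat.lt_succ_iff.1 ((Nat.div_lt_iff_lt_mul (by omega)).2 (by nlinarith))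
          simp_rw [mul_comm a, filter_mul_le_Ioc_eq_Ioc_div 0 (by omega) hdiv, card_Ioc,
            Nat.sub_zero]
      _ = ∑ b ∈ Ioc 0 K, #{a ∈ Ioc K N | a * b ≤ N} :=
          sum_card_bipartiteAbove_eq_sum_card_bipartiteBelow _
      _ = ∑ b ∈ Ioc 0 K, (N / b - K) := by
          refine sum_congr rfl fun b hb => ?_
          rw [filter_mul_le_Ioc_eq_Ioc_div K (mem_Ioc.1 hb).1 (Nat.div_le_self N b), card_Ioc]
  have hhead : ∑ b ∈ Ioc 0 K, (N / b - K) + K * K = ∑ b ∈ Ioc 0 K, N / b := by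
    have hsum : ∑ b ∈ Ioc 0 K, K = K * K := by simp
    rw [← hsum, ← sum_add_distrib]
    refine sum_congr rfl fun b hb => Nat.sub_add_cancel ?_
    have hb := mem_Ioc.1 hb
    rw [Nat.le_div_iff_mul_le hb.1]
    nlinarith
  rw [← sum_Ioc_consecutive _ (Nat.zero_le K) hKN, htail, add_assoc, hhead, two_mul]

end Nat

lemma Real.log_sub_log_le_div {x y : ℝ} (hx : 0 < x) (hy : 0 < y) :
    log y - log x ≤ (y - x) / x := by
  have h := log_le_sub_one_of_pos (div_pos hy hx)
  rwa [log_div hy.ne' hx.ne', div_sub_one hx.ne'] at h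

lemma abs_harmonic_sub_log_sub_eulerMascheroniConstant_le {K : ℕ} (hK : 0 < K) :
    |(harmonic K : ℝ) - log K - eulerMascheroniConstant| ≤ 1 / K := by
  have hγ_lower := eulerMascheroniSeq_lt_eulerMascheroniConstant K
  have hγ_upper := eulerMascheroniConstant_lt_eulerMascheroniSeq' K
  rw [eulerMascheroniSeq] at hγ_lower
  rw [eulerMascheroniSeq', if_neg hK.ne'] at hγ_upper
  have hlog := log_sub_log_le_div (Nat.cast_pos.2 hK) (by positivity : (0 : ℝ) < K + 1)
  rw [add_sub_cancel_left] at hlog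
  rw [abs_le]
  constructor <;> linarith

lemma abs_sum_div_sub_mul_harmonic_le (N K : ℕ) :
    |∑ a ∈ Ioc 0 K, ((N / a : ℕ) : ℝ) - N * harmonic K| ≤ K := by
  have hterm : ∀ a ∈ Ioc 0 K, |((N / a : ℕ) : ℝ) - N * (a : ℝ)⁻¹| ≤ 1 := by
    intro a _
    rw [← div_eq_mul_inv, ← Nat.floor_div_eq_div (K := ℝ), abs_sub_comm,
      abs_of_nonneg (sub_nonneg.2 (Nat.floor_le (by positivity)))]
    linarith [Nat.lt_floor_add_one ((N : ℝ) / a)]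
  have hIcc : Icc 1 K = Ioc 0 K := Icc_add_one_left_eq_Ioc 0 K
  rw [harmonic_eq_sum_Icc, hIcc]
  push_cast
  rw [mul_sum, ← sum_sub_distrib]
  calc |∑ a ∈ Ioc 0 K, (((N / a : ℕ) : ℝ) - N * (a : ℝ)⁻¹)|
      ≤ ∑ a ∈ Ioc 0 K, |((N / a : ℕ) : ℝ) - N * (a : ℝ)⁻¹| := abs_sum_le_sum_abs _ _
    _ ≤ ∑ _a ∈ Ioc 0 K, (1 : ℝ) := sum_le_sum hterm
    _ = K := by simp

lemma abs_sum_card_divisors_sub_le {N K : ℕ} (hK0 : 0 < K) (hK : K * K ≤ N)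
    (hN : N < (K + 1) * (K + 1)) :
    |∑ n ∈ Ioc 0 N, (#n.divisors : ℝ) - (2 * N * (log K + eulerMascheroniConstant) - K * K)| ≤
      2 * K + 2 * N / K := by
  have hcount : ∑ n ∈ Ioc 0 N, (#n.divisors : ℝ) =
      2 * ∑ a ∈ Ioc 0 K, ((N / a : ℕ) : ℝ) - K * K := by
    have h := Nat.sum_Ioc_div_add_mul_self hK hN
    rw [← Nat.sum_Ioc_card_divisors] at h
    rw [eq_sub_iff_add_eq]
    exact_mod_cast h
  set T := ∑ a ∈ Ioc 0 K, ((N / a : ℕ) : ℝ)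
  set E := (harmonic K : ℝ) - log K - eulerMascheroniConstant with hE_def
  have hT : |2 * (T - N * harmonic K)| ≤ 2 * K := by
    rw [abs_mul, abs_two]
    linarith [abs_sum_div_sub_mul_harmonic_le N K]
  have hE : |2 * N * E| ≤ 2 * N / K := by
    rw [abs_mul, abs_of_nonneg (by positivity)]
    calc 2 * N * |E| ≤ 2 * N * (1 / K) := by
          gcongr; exact abs_harmonic_sub_log_sub_eulerMascheroniConstant_le hK0
      _ = 2 * N / K := by ring
  calc |∑ n ∈ Ioc 0 N, (#n.divisors : ℝ) - (2 * N * (log K + eulerMascheroniConstant) - K * K)|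
      = |2 * (T - N * harmonic K) + 2 * N * E| := by rw [hcount, hE_def]; ring_nf
    _ ≤ 2 * K + 2 * N / K := (abs_add_le _ _).trans (add_le_add hT hE)

lemma Nat.floor_sqrt_mul_self_le_floor {x : ℝ} (hx : 0 ≤ x) : ⌊√x⌋₊ * ⌊√x⌋₊ ≤ ⌊x⌋₊ := by
  apply Nat.le_floor
  push_cast
  calc (⌊√x⌋₊ : ℝ) * ⌊√x⌋₊ ≤ √x * √x :=
        _root_.mul_self_le_mul_self (Nat.cast_nonneg _) (Nat.floor_le (sqrt_nonneg x))
    _ = x := mul_self_sqrt hx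

lemma Nat.floor_lt_floor_sqrt_add_one_mul_self {x : ℝ} (hx : 0 ≤ x) :
    ⌊x⌋₊ < (⌊√x⌋₊ + 1) * (⌊√x⌋₊ + 1) := by
  rw [Nat.floor_lt hx]
  push_cast
  calc x = √x * √x := (mul_self_sqrt hx).symm
    _ < (⌊√x⌋₊ + 1) * (⌊√x⌋₊ + 1) :=
        _root_.mul_self_lt_mul_self (sqrt_nonneg x) (Nat.lt_floor_add_one √x)

lemma div_floor_sqrt_le_two_mul_sqrt {x : ℝ} (hx : 1 ≤ x) : x / ⌊√x⌋₊ ≤ 2 * √x := by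
  have hs : 1 ≤ √x := one_le_sqrt.2 hx
  have hK : (1 : ℝ) ≤ ⌊√x⌋₊ := by exact_mod_cast Nat.le_floor (by simpa using hs)
  have hsK : √x < ⌊√x⌋₊ + 1 := Nat.lt_floor_add_one √x
  have hss : √x * √x = x := mul_self_sqrt (by linarith)
  rw [div_le_iff₀ (by linarith)]
  nlinarith

lemma abs_two_mul_floor_mul_log_floor_sqrt_sub_le {x : ℝ} (hx : 1 ≤ x) :
    |2 * ⌊x⌋₊ * (log ⌊√x⌋₊ + eulerMascheroniConstant) - ⌊√x⌋₊ * ⌊√x⌋₊ -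
        x * log x - (2 * eulerMascheroniConstant - 1) * x| ≤ 8 * √x := by
  set γ := eulerMascheroniConstant
  set s := √x
  set K := ⌊s⌋₊
  set N := ⌊x⌋₊
  have hs : 1 ≤ s := one_le_sqrt.2 hx
  have hss : s * s = x := mul_self_sqrt (by linarith)
  have hKs : (K : ℝ) ≤ s := Nat.floor_le (by linarith)
  have hsK : s < K + 1 := Nat.lt_floor_add_one s
  have hK : (1 : ℝ) ≤ K := by exact_mod_cast Nat.le_floor (by simpa using hs)
  have hNx : |(N : ℝ) - x| ≤ 1 := by
    rw [abs_sub_comm, abs_of_nonneg (sub_nonneg.2 (Nat.floor_le (by linarith)))]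
    linarith [Nat.lt_floor_add_one x]
  have hγ0 : 0 < γ := one_half_pos.trans one_half_lt_eulerMascheroniConstant
  have hγ1 : γ < 1 := eulerMascheroniConstant_lt_two_thirds.trans (by norm_num)
  have hlogK : 0 ≤ log K := log_nonneg hK
  have hlogs : log s ≤ s - 1 := log_le_sub_one_of_pos (by linarith)
  have hlogKs : log K ≤ log s := log_le_log (by linarith) hKs
  have hlogsK : log s - log K ≤ 1 / K :=
    (log_sub_log_le_div (by linarith) (by linarith)).trans (by gcongr; linarith)
  have hround : |2 * (N - x) * (log K + γ)| ≤ 2 * s := by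
    rw [abs_mul, abs_mul, abs_two, abs_of_nonneg (by linarith : 0 ≤ log K + γ)]
    nlinarith
  have hlog : |2 * x * (log K - log s)| ≤ 4 * s := by
    rw [abs_mul, abs_of_nonneg (by linarith : 0 ≤ 2 * x), abs_sub_comm,
      abs_of_nonneg (by linarith : 0 ≤ log s - log K)]
    calc 2 * x * (log s - log K) ≤ 2 * x * (1 / K) := by gcongr
      _ = 2 * (x / K) := by ring
      _ ≤ 4 * s := by linarith [div_floor_sqrt_le_two_mul_sqrt hx]
  have hsquare : |x - K * K| ≤ 2 * s := by
    rw [abs_of_nonneg (by nlinarith)]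
    nlinarith
  have hlogx : log x = 2 * log s := by
    rw [← hss, log_mul (by positivity) (by positivity)]
    ring
  calc |2 * N * (log K + γ) - K * K - x * log x - (2 * γ - 1) * x|
      = |2 * (N - x) * (log K + γ) + 2 * x * (log K - log s) + (x - K * K)| := by
        rw [hlogx]; ring_nf
    _ ≤ |2 * (N - x) * (log K + γ)| + |2 * x * (log K - log s)| + |x - K * K| :=
        abs_add_three _ _ _
    _ ≤ 8 * s := by linarith

/-- **Dirichlet's divisor theorem**: `∑_{n ≤ x} τ(n) = x log x + (2γ - 1) x + O(√x)`,
where `τ` is the number-of-divisors function and `γ` is the Euler–Mascheroni constant. -/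
theorem dirichlet_divisor_theorem :
    ∃ C : ℝ, 0 < C ∧ ∃ x₀ : ℝ, 1 ≤ x₀ ∧ ∀ x : ℝ, x₀ ≤ x →
      |(∑ n ∈ Finset.Icc 1 ⌊x⌋₊, (n.divisors.card : ℝ)) -
          x * Real.log x - (2 * Real.eulerMascheroniConstant - 1) * x| ≤
        C * Real.sqrt x := by
  refine ⟨14, by norm_num, 1, le_rfl, fun x hx => ?_⟩
  have hx0 : 0 ≤ x := zero_le_one.trans hx
  set K := ⌊√x⌋₊
  set N := ⌊x⌋₊
  have hK : 0 < K := Nat.floor_pos.2 (one_le_sqrt.2 hx)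
  have hcount := abs_sum_card_divisors_sub_le hK (Nat.floor_sqrt_mul_self_le_floor hx0)
    (Nat.floor_lt_floor_sqrt_add_one_mul_self hx0)
  have herror : 2 * (K : ℝ) + 2 * N / K ≤ 6 * √x := by
    have hKs : (K : ℝ) ≤ √x := Nat.floor_le (sqrt_nonneg x)
    have hNK : (N : ℝ) / K ≤ x / K := by gcongr; exact Nat.floor_le hx0
    linarith [div_floor_sqrt_le_two_mul_sqrt hx, mul_div_assoc 2 (N : ℝ) K]
  have hsmooth := abs_two_mul_floor_mul_log_floor_sqrt_sub_le hx
  rw [show Icc 1 N = Ioc 0 N from Icc_add_one_left_eq_Ioc 0 N]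
  rw [abs_le] at hcount hsmooth ⊢
  constructor <;> linarith
end

section
/- Turán's first main theorem of the power-sum method: there exists an absolute constant A > 0 with the following property. Let n ≥ 1, let z₁, …, z_n be pairwise distinct complex numbers with |z_j| ≥ 1 for every j, let b₁, …, b_n be complex numbers, and write s_v = ∑_{j=1}^n b_j z_j^v. Then for every nonnegative integer m there exists an integer v with m+1 ≤ v ≤ m+n such that |s_v| ≥ (n/(A(m+n)))^n · |s₀|, where s₀ = ∑_{j=1}^n b_j. -/
/-!
Put `w_j = z_j⁻¹`, so `‖w_j‖ ≤ 1`, and `N = m + n`. Truncating the power series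
`∏ⱼ (1 - w_j X)⁻¹` at degree `m` and multiplying back by `∏ⱼ (1 - w_j X)` gives a
polynomial `F` of degree `≤ N` that vanishes at every `z_j` and is `≡ 1 mod X^(m+1)`. Hence
`1 = -∑_{m < k ≤ N} F_k z_j^k` for all `j`, so `s₀ = -∑_{m < k ≤ N} F_k s_k`. Comparing
coefficientwise with the case `w_j = 1` bounds `∑ |F_k|` by `C(N, n) 2ⁿ ≤ (2eN/n)ⁿ`, and the
largest `|s_k|` with `m < k ≤ N` does the job with `A = 6`.
-/

open Finset
open scoped Polynomial Nat

namespace PowerSeries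

section Majorant

variable {R : Type*}

def IsMajorant [Semiring R] [Norm R] (F : ℝ⟦X⟧) (f : R⟦X⟧) : Prop :=
  ∀ k, ‖coeff k f‖ ≤ coeff k F

variable [SeminormedRing R] {F G : ℝ⟦X⟧} {f g : R⟦X⟧}

theorem IsMajorant.coeff_nonneg (h : IsMajorant F f) (k : ℕ) : 0 ≤ coeff k F :=
  (norm_nonneg _).trans (h k)

theorem IsMajorant.mul (hf : IsMajorant F f) (hg : IsMajorant G g) :
    IsMajorant (F * G) (f * g) := by
  intro k
  rw [coeff_mul, coeff_mul]
  refine (norm_sum_le _ _).trans (sum_le_sum fun p _ => ?_)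
  exact (norm_mul_le _ _).trans (mul_le_mul (hf _) (hg _) (norm_nonneg _) (hf.coeff_nonneg _))

theorem IsMajorant.trunc (h : IsMajorant F f) (n : ℕ) :
    IsMajorant (trunc n F : ℝ⟦X⟧) (trunc n f : R⟦X⟧) := by
  intro k
  simp only [Polynomial.coeff_coe, coeff_trunc]
  split_ifs
  · exact h k
  · simp

theorem IsMajorant.sum_norm_coeff_le_eval_one {P : ℝ[X]} {p : R[X]}
    (h : IsMajorant (P : ℝ⟦X⟧) (p : R⟦X⟧)) {D : ℕ} (hD : P.natDegree < D) :
    ∑ k ∈ range D, ‖p.coeff k‖ ≤ P.eval 1 := by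
  rw [Polynomial.eval_eq_sum_range' hD]
  refine sum_le_sum fun k _ => ?_
  simpa using h k

variable [NormOneClass R]

theorem isMajorant_one : IsMajorant (1 : ℝ⟦X⟧) (1 : R⟦X⟧) := by
  intro k
  rw [coeff_one, coeff_one]
  split_ifs <;> simp

theorem isMajorant_mk_one_mk_pow {w : R} (hw : ‖w‖ ≤ 1) : IsMajorant (mk 1) (mk (w ^ ·)) :=
  fun k => by simpa using (norm_pow_le w k).trans (pow_le_one₀ (norm_nonneg w) hw)

theorem isMajorant_one_add_X_one_sub_C_mul_X {w : R} (hw : ‖w‖ ≤ 1) :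
    IsMajorant (1 + X) (1 - C w * X) := by
  rintro (_ | _ | k) <;> simp [coeff_one, coeff_X, hw]

end Majorant

theorem IsMajorant.prod {R ι : Type*} [SeminormedCommRing R] [NormOneClass R] (s : Finset ι)
    {F : ι → ℝ⟦X⟧} {f : ι → R⟦X⟧} (h : ∀ i ∈ s, IsMajorant (F i) (f i)) :
    IsMajorant (∏ i ∈ s, F i) (∏ i ∈ s, f i) := by
  classical
  induction s using Finset.induction_on with
  | empty => simpa using isMajorant_one
  | insert a s ha ih =>
    rw [prod_insert ha, prod_insert ha]
    exact (h a (mem_insert_self a s)).mul (ih fun i hi => h i (mem_insert_of_mem hi))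

theorem mk_pow_mul_one_sub_C_mul_X {R : Type*} [CommRing R] (w : R) :
    mk (w ^ ·) * (1 - C w * X) = 1 := by
  simpa [rescale_mk] using congrArg (rescale w) (mk_one_mul_one_sub_eq_one (S := R))

theorem eval_one_trunc_succ (F : ℝ⟦X⟧) (m : ℕ) :
    (trunc (m + 1) F).eval 1 = coeff m (F * mk 1) := by
  rw [Polynomial.eval_eq_sum_range' (natDegree_trunc_lt F m), coeff_mul,
    Nat.sum_antidiagonal_eq_sum_range_succ_mk]
  refine sum_congr rfl fun k hk => ?_
  simp [coeff_trunc, mem_range.mp hk]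

end PowerSeries

section TuranPolynomial

open Polynomial
open scoped PowerSeries

variable {𝕜 ι : Type*} [NormedField 𝕜] [Fintype ι]

theorem coe_prod_one_sub_C_mul_X {R : Type*} [CommRing R] (w : ι → R) :
    ((∏ i, (1 - C (w i) * X) : R[X]) : R⟦X⟧) =
      ∏ i, (1 - PowerSeries.C (w i) * PowerSeries.X) := by
  rw [← coeToPowerSeries.ringHom_apply, map_prod]
  simp [coeToPowerSeries.ringHom_apply]

noncomputable def turanPolynomial (w : ι → 𝕜) (m : ℕ) : 𝕜[X] :=
  PowerSeries.trunc (m + 1) (∏ i, PowerSeries.mk (w i ^ ·)) * ∏ i, (1 - C (w i) * X)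

/-- `turanPolynomial w m` for `w ≡ 1` with the signs of `∏ (1 - X)` dropped. -/
noncomputable def turanMajorant (n m : ℕ) : ℝ[X] :=
  PowerSeries.trunc (m + 1) (PowerSeries.mk 1 ^ n) * (1 + X) ^ n

theorem trunc_turanPolynomial (w : ι → 𝕜) (m : ℕ) :
    PowerSeries.trunc (m + 1) (turanPolynomial w m : 𝕜⟦X⟧) = 1 := by
  rw [turanPolynomial, Polynomial.coe_mul, PowerSeries.trunc_trunc_mul, coe_prod_one_sub_C_mul_X,
    ← prod_mul_distrib]
  simp [PowerSeries.mk_pow_mul_one_sub_C_mul_X]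

theorem eval_inv_turanPolynomial (w : ι → 𝕜) (m : ℕ) {i : ι} (hi : w i ≠ 0) :
    (turanPolynomial w m).eval (w i)⁻¹ = 0 := by
  rw [turanPolynomial, eval_mul, eval_prod]
  exact mul_eq_zero_of_right _ (prod_eq_zero (mem_univ i) (by simp [hi]))

theorem natDegree_turanPolynomial_le (w : ι → 𝕜) (m : ℕ) :
    (turanPolynomial w m).natDegree ≤ m + Fintype.card ι := by
  have hfactor (i : ι) : (1 - C (w i) * X).natDegree ≤ 1 :=
    (natDegree_sub_le _ _).trans (by simpa using (natDegree_C_mul_le _ _).trans natDegree_X_le)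
  refine natDegree_mul_le.trans
    (_root_.add_le_add (Nat.lt_succ_iff.mp (PowerSeries.natDegree_trunc_lt _ m)) ?_)
  refine (natDegree_prod_le _ _).trans ?_
  simpa using sum_le_card_nsmul univ _ 1 fun i _ => hfactor i

theorem natDegree_turanMajorant_le (n m : ℕ) : (turanMajorant n m).natDegree ≤ m + n := by
  have h1X : ((1 : ℝ[X]) + X).natDegree ≤ 1 :=
    natDegree_add_le_of_degree_le (by simp) natDegree_X_le
  refine natDegree_mul_le.trans (_root_.add_le_add ?_ ((natDegree_pow_le_of_le n h1X).trans_eq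
    (mul_one n)))
  exact Nat.lt_succ_iff.mp (PowerSeries.natDegree_trunc_lt _ m)

theorem eval_one_turanMajorant (n m : ℕ) :
    (turanMajorant n m).eval 1 = (m + n).choose n * 2 ^ n := by
  simp only [turanMajorant, eval_mul, eval_pow, eval_add, eval_one, eval_X,
    PowerSeries.eval_one_trunc_succ, ← pow_succ, PowerSeries.mk_one_pow_eq_mk_choose_add,
    PowerSeries.coeff_mk]
  norm_num [add_comm]

theorem isMajorant_turanPolynomial (w : ι → 𝕜) (hw : ∀ i, ‖w i‖ ≤ 1) (m : ℕ) :
    PowerSeries.IsMajorant (turanMajorant (Fintype.card ι) m : ℝ⟦X⟧)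
      (turanPolynomial w m : 𝕜⟦X⟧) := by
  have hinv : PowerSeries.IsMajorant (PowerSeries.mk 1 ^ Fintype.card ι)
      (∏ i, PowerSeries.mk (w i ^ ·)) := by
    simpa using PowerSeries.IsMajorant.prod univ fun i _ =>
      PowerSeries.isMajorant_mk_one_mk_pow (hw i)
  have hprod : PowerSeries.IsMajorant (((1 + X) ^ Fintype.card ι : ℝ[X]) : ℝ⟦X⟧)
      ((∏ i, (1 - C (w i) * X) : 𝕜[X]) : 𝕜⟦X⟧) := by
    rw [coe_prod_one_sub_C_mul_X]
    simpa using PowerSeries.IsMajorant.prod univ fun i _ =>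
      PowerSeries.isMajorant_one_add_X_one_sub_C_mul_X (hw i)
  rw [turanPolynomial, turanMajorant, Polynomial.coe_mul, Polynomial.coe_mul]
  exact (hinv.trunc _).mul hprod

theorem sum_norm_coeff_turanPolynomial_le (w : ι → 𝕜) (hw : ∀ i, ‖w i‖ ≤ 1) (m : ℕ) :
    ∑ k ∈ range (m + Fintype.card ι + 1), ‖(turanPolynomial w m).coeff k‖ ≤
      (m + Fintype.card ι).choose (Fintype.card ι) * 2 ^ Fintype.card ι := by
  rw [← eval_one_turanMajorant]
  exact (isMajorant_turanPolynomial w hw m).sum_norm_coeff_le_eval_one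
    (Nat.lt_succ_of_le (natDegree_turanMajorant_le _ m))

theorem exists_sum_mul_pow_eq_one (z : ι → 𝕜) (hz : ∀ i, 1 ≤ ‖z i‖) (m : ℕ) :
    ∃ a : ℕ → 𝕜, (∀ i, ∑ k ∈ Ico (m + 1) (m + Fintype.card ι + 1), a k * z i ^ k = 1) ∧
      ∑ k ∈ Ico (m + 1) (m + Fintype.card ι + 1), ‖a k‖ ≤
        (m + Fintype.card ι).choose (Fintype.card ι) * 2 ^ Fintype.card ι := by
  set n := Fintype.card ι
  set F := turanPolynomial (fun i => (z i)⁻¹) m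
  have heval (x : 𝕜) : F.eval x = 1 + ∑ k ∈ Ico (m + 1) (m + n + 1), F.coeff k * x ^ k := by
    have hlow : ∑ k ∈ range (m + 1), F.coeff k * x ^ k = 1 := by
      simpa [PowerSeries.trunc_apply, eval_finsetSum] using
        congrArg (eval x) (trunc_turanPolynomial (fun i => (z i)⁻¹) m)
    rw [eval_eq_sum_range' (Nat.lt_succ_of_le (natDegree_turanPolynomial_le _ m)),
      ← sum_range_add_sum_Ico _ (by omega : m + 1 ≤ m + n + 1), hlow]
  refine ⟨fun k => -F.coeff k, fun i => ?_, ?_⟩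
  · have hzi : z i ≠ 0 := norm_pos_iff.mp (one_pos.trans_le (hz i))
    have hroot : F.eval (z i) = 0 := by
      simpa using eval_inv_turanPolynomial (fun i => (z i)⁻¹) m (inv_ne_zero hzi)
    simp only [neg_mul, sum_neg_distrib]
    linear_combination heval (z i) - hroot
  · have hsubset : Ico (m + 1) (m + n + 1) ⊆ range (m + n + 1) := fun k hk => by
      simp only [mem_Ico, mem_range] at hk ⊢
      omega
    simp only [norm_neg]
    refine (sum_le_sum_of_subset_of_nonneg hsubset fun _ _ _ => norm_nonneg _).trans ?_
    exact sum_norm_coeff_turanPolynomial_le _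
      (fun i => by simpa using inv_le_one_of_one_le₀ (hz i)) m

theorem exists_norm_sum_le_mul_norm_sum_mul_pow [Nonempty ι] (z b : ι → 𝕜)
    (hz : ∀ i, 1 ≤ ‖z i‖) (m : ℕ) :
    ∃ v ∈ Ico (m + 1) (m + Fintype.card ι + 1), ‖∑ i, b i‖ ≤
      (m + Fintype.card ι).choose (Fintype.card ι) * 2 ^ Fintype.card ι *
        ‖∑ i, b i * z i ^ v‖ := by
  obtain ⟨a, ha, hbound⟩ := exists_sum_mul_pow_eq_one z hz m
  set s : ℕ → 𝕜 := fun k => ∑ i, b i * z i ^ k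
  obtain ⟨v, hv, hmax⟩ := exists_max_image (Ico (m + 1) (m + Fintype.card ι + 1)) (‖s ·‖)
    ⟨m + 1, mem_Ico.mpr ⟨le_rfl, by have := Fintype.card_pos (α := ι); omega⟩⟩
  refine ⟨v, hv, ?_⟩
  have hs : ∑ i, b i = ∑ k ∈ Ico (m + 1) (m + Fintype.card ι + 1), a k * s k := by
    simp only [s, mul_sum]
    rw [sum_comm]
    refine sum_congr rfl fun i _ => ?_
    calc b i = b i * ∑ k ∈ Ico (m + 1) (m + Fintype.card ι + 1), a k * z i ^ k := by
          rw [ha i, mul_one]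
      _ = _ := by rw [mul_sum]; exact sum_congr rfl fun k _ => by ring
  calc ‖∑ i, b i‖ ≤ ∑ k ∈ Ico (m + 1) (m + Fintype.card ι + 1), ‖a k‖ * ‖s k‖ := by
        rw [hs]
        exact (norm_sum_le _ _).trans_eq (by simp only [norm_mul])
    _ ≤ ∑ k ∈ Ico (m + 1) (m + Fintype.card ι + 1), ‖a k‖ * ‖s v‖ := by
        gcongr with k hk
        exact hmax k hk
    _ ≤ _ := by
        rw [← sum_mul]
        exact mul_le_mul_of_nonneg_right hbound (norm_nonneg _)

end TuranPolynomial

theorem div_pow_mul_choose_mul_two_pow_le_one {n N : ℕ} (hN : N ≠ 0) :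
    ((n : ℝ) / (6 * N)) ^ n * (N.choose n * 2 ^ n) ≤ 1 := by
  have hexp : Real.exp n ≤ 3 ^ n := by
    rw [← Real.exp_one_pow]
    exact pow_le_pow_left₀ (Real.exp_pos 1).le (Real.exp_one_lt_d9.le.trans (by norm_num)) n
  calc ((n : ℝ) / (6 * N)) ^ n * (N.choose n * 2 ^ n)
      ≤ ((n : ℝ) / (6 * N)) ^ n * (N ^ n / n ! * 2 ^ n) := by
        gcongr
        exact Nat.choose_le_pow_div n N
    _ = ((n : ℝ) / (6 * N) * N * 2) ^ n / n ! := by rw [mul_pow, mul_pow]; ring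
    _ = (n : ℝ) ^ n / n ! / 3 ^ n := by
        rw [show (n : ℝ) / (6 * N) * N * 2 = n / 3 by field_simp; ring, div_pow]
        ring
    _ ≤ Real.exp n / 3 ^ n := by
        gcongr
        exact Real.pow_div_factorial_le_exp _ (Nat.cast_nonneg n) n
    _ ≤ 1 := div_le_one_of_le₀ hexp (by positivity)

/-- **Turán's first main theorem** of the power-sum method: there is an absolute
constant `A > 0` such that for any `n ≥ 1` distinct complex numbers `z₁,…,zₙ` of modulus
at least `1`, any coefficients `b₁,…,bₙ ∈ ℂ`, and any `m ≥ 0`, some power sum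
`s_v = ∑_j b_j z_j^v` with `m+1 ≤ v ≤ m+n` satisfies
`|s_v| ≥ (n/(A(m+n)))^n |s₀|`. -/
theorem turan_first_main_theorem :
    ∃ A : ℝ, 0 < A ∧
      ∀ (n : ℕ), 1 ≤ n → ∀ (z b : Fin n → ℂ), Function.Injective z →
        (∀ j, 1 ≤ ‖z j‖) → ∀ m : ℕ, ∃ v : ℕ, m + 1 ≤ v ∧ v ≤ m + n ∧
          ((n : ℝ) / (A * (m + n))) ^ n * ‖∑ j, b j‖ ≤ ‖∑ j, b j * z j ^ v‖ := by
  refine ⟨6, by norm_num, fun n hn z b _ hz m => ?_⟩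
  have : Nonempty (Fin n) := Fin.pos_iff_nonempty.mp hn
  obtain ⟨v, hv, hs⟩ := exists_norm_sum_le_mul_norm_sum_mul_pow z b hz m
  simp only [Fintype.card_fin, mem_Ico] at hv hs
  refine ⟨v, hv.1, Nat.lt_succ_iff.mp hv.2, ?_⟩
  calc ((n : ℝ) / (6 * (m + n))) ^ n * ‖∑ j, b j‖
      ≤ ((n : ℝ) / (6 * (m + n))) ^ n * ((m + n).choose n * 2 ^ n * ‖∑ j, b j * z j ^ v‖) :=
        mul_le_mul_of_nonneg_left hs (by positivity)
    _ = ((n : ℝ) / (6 * ↑(m + n))) ^ n * ((m + n).choose n * 2 ^ n) *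
          ‖∑ j, b j * z j ^ v‖ := by
        push_cast
        ring
    _ ≤ ‖∑ j, b j * z j ^ v‖ :=
        mul_le_of_le_one_left (norm_nonneg _) (div_pow_mul_choose_mul_two_pow_le_one (by omega))
end
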